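/- arXiv:2311.18772 — 6 statements merged into one kernel-verified Lean document; each statement's English description precedes it below -/
import Mathlib

section
/- In Moore's nim(n, ≤k), a position x = (x_1, ..., x_n) is a P-position if and only if for every bit index j, the sum over i of the j-th binary digit of x_i is congruent to 0 modulo k+1. -/
/-- The `j`-th binary digit of `m`. -/
def digit (m j : ℕ) : ℕ := m / 2 ^ j % 2

/-- The `j`-th column sum of the Bouton matrix of a position. -/
def colSum {n : ℕ} (x : Fin n → ℕ) (j : ℕ) : ℕ := ∑ i, digit (x i) j

/-- A move of classical nim: strictly reduce exactly one pile. -/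
def NimMove {n : ℕ} (x y : Fin n → ℕ) : Prop :=
  ∃ i, y i < x i ∧ ∀ j, j ≠ i → y j = x j

/-- A move of Moore's nim(n, ≤k): strictly reduce at least one and at most `k` piles. -/
def MooreMove (k : ℕ) {n : ℕ} (x y : Fin n → ℕ) : Prop :=
  ∃ S : Finset (Fin n), S.Nonempty ∧ S.card ≤ k ∧ (∀ i ∈ S, y i < x i) ∧ ∀ i ∉ S, y i = x i

/-- A move of exact (n, k) nim: strictly reduce exactly `k` piles. -/
def ExactMove (k : ℕ) {n : ℕ} (x y : Fin n → ℕ) : Prop :=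
  ∃ S : Finset (Fin n), S.card = k ∧ (∀ i ∈ S, y i < x i) ∧ ∀ i ∉ S, y i = x i

/-- N-positions of an impartial game: there is a move to a position all of whose
moves lead to N-positions (i.e. a move to a P-position). -/
inductive NPos {α : Type*} (Move : α → α → Prop) : α → Prop where
  | intro {x y : α} (h : Move x y) (hy : ∀ z, Move y z → NPos Move z) : NPos Move x

/-- P-positions of an impartial game: every move leads to an N-position
(in particular, terminal positions are P-positions). -/
def PPos {α : Type*} (Move : α → α → Prop) (x : α) : Prop :=
  ∀ y, Move x y → NPos Move y

/-!
The balanced positions, those whose every binary column sums to a multiple of `k + 1`, form a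
kernel of the (well-founded) game graph, and in such a game the P-positions are exactly the
kernel. No move joins two balanced positions: at the highest bit where the two positions
differ, every pile that differs there loses a one, so that column drops by between `1` and `k`.
From an unbalanced position one repairs the columns from the top down, keeping a set `T` of at
most `k` piles that have already been decreased, so that their lower digits are free. A column
is fixed either by setting its digit on some piles of `T`, or, when `T` is too small for that,
by clearing it on `r < k + 1 - #T` fresh piles whose digit is `1`; in both cases at most `k`
piles are touched.
-/

open Finset

section Kernel

variable {α : Type*} {Move : α → α → Prop}

theorem NPos.not_pPos {x : α} (h : NPos Move x) : ¬ PPos Move x := by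
  induction h with
  | intro hxy _ ih =>
    intro hx
    obtain ⟨hyz, hz⟩ := hx _ hxy
    exact ih _ hyz hz

theorem pPos_iff_of_kernel {G : α → Prop} (hwf : WellFounded (flip Move))
    (hstable : ∀ x y, G x → Move x y → ¬ G y) (habsorb : ∀ x, ¬ G x → ∃ y, Move x y ∧ G y)
    (x : α) : PPos Move x ↔ G x := by
  have key : ∀ x, (G x → PPos Move x) ∧ (¬ G x → NPos Move x) := fun x => by
    induction x using hwf.induction with
    | _ x ih =>
      refine ⟨fun hx y hxy => (ih y hxy).2 (hstable x y hx hxy), fun hx => ?_⟩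
      obtain ⟨y, hxy, hy⟩ := habsorb x hx
      exact NPos.intro hxy ((ih y hxy).1 hy)
  exact ⟨fun hx => by_contra fun hG => ((key x).2 hG).not_pPos hx, (key x).1⟩

end Kernel

theorem digit_lt_two (m j : ℕ) : digit m j < 2 := Nat.mod_lt _ two_pos

theorem div_two_pow_succ (m j : ℕ) : m / 2 ^ (j + 1) = m / 2 ^ j / 2 := by
  rw [pow_succ, Nat.div_div_eq_div_mul]

theorem digit_eq_of_div_eq {a c b j : ℕ} (h : a / 2 ^ b = c / 2 ^ b) (hj : b ≤ j) :
    digit a j = digit c j := by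
  obtain ⟨d, rfl⟩ := Nat.exists_eq_add_of_le hj
  simp only [digit, pow_add, ← Nat.div_div_eq_div_mul, h]

theorem lt_two_pow_sum {n : ℕ} (x : Fin n → ℕ) (i : Fin n) : x i < 2 ^ ∑ i, x i :=
  (single_le_sum (fun i _ => Nat.zero_le (x i)) (mem_univ i)).trans_lt Nat.lt_two_pow_self

section ColSum

variable {n : ℕ} {x y : Fin n → ℕ}

theorem colSum_eq_of_div_eq {b j : ℕ} (h : ∀ i, x i / 2 ^ b = y i / 2 ^ b) (hj : b ≤ j) :
    colSum x j = colSum y j :=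
  sum_congr rfl fun i _ => digit_eq_of_div_eq (h i) hj

theorem colSum_eq_zero_of_lt {j : ℕ} (h : ∀ i, x i < 2 ^ j) : colSum x j = 0 :=
  sum_eq_zero fun i _ => by simp [digit, Nat.div_eq_of_lt (h i)]

end ColSum

def MooreBalanced (k : ℕ) {n : ℕ} (x : Fin n → ℕ) : Prop := ∀ j, k + 1 ∣ colSum x j

namespace MooreMove

variable {k n : ℕ} {x y : Fin n → ℕ}

theorem le (h : MooreMove k x y) (i : Fin n) : y i ≤ x i := by
  obtain ⟨S, -, -, hlt, heq⟩ := h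
  by_cases hi : i ∈ S
  · exact (hlt i hi).le
  · exact (heq i hi).le

theorem sum_lt (h : MooreMove k x y) : ∑ i, y i < ∑ i, x i := by
  have hle := h.le
  obtain ⟨S, ⟨i₀, hi₀⟩, -, hlt, -⟩ := h
  exact sum_lt_sum (fun i _ => hle i) ⟨i₀, mem_univ i₀, hlt i₀ hi₀⟩

theorem wellFounded_flip : WellFounded (flip (MooreMove k (n := n))) :=
  Subrelation.wf (fun h => sum_lt h) (measure fun x : Fin n → ℕ => ∑ i, x i).wf

theorem not_mooreBalanced (h : MooreMove k x y) (hx : MooreBalanced k x) :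
    ¬ MooreBalanced k y := by
  intro hy
  have hle := h.le
  obtain ⟨S, ⟨i₀, hi₀⟩, hcard, hlt, heq⟩ := h
  have hP : ∃ l, ∀ i, x i / 2 ^ l = y i / 2 ^ l := ⟨∑ i, x i, fun i => by
    rw [Nat.div_eq_of_lt (lt_two_pow_sum x i),
      Nat.div_eq_of_lt ((hle i).trans_lt (lt_two_pow_sum x i))]⟩
  obtain ⟨j, hj⟩ : ∃ j, Nat.find hP = j + 1 :=
    Nat.exists_eq_succ_of_ne_zero fun h0 => by
      have := (Nat.find_eq_zero hP).1 h0 i₀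
      simp only [pow_zero, Nat.div_one] at this
      exact (hlt i₀ hi₀).ne this.symm
  have hagree : ∀ i, x i / 2 ^ (j + 1) = y i / 2 ^ (j + 1) := hj ▸ Nat.find_spec hP
  have hdiffer : ¬ ∀ i, x i / 2 ^ j = y i / 2 ^ j := Nat.find_min hP (by omega)
  set Δ := univ.filter fun i => x i / 2 ^ j ≠ y i / 2 ^ j
  -- the piles agree above `j`, so a pile that differs at `j` has digit `1` there in `x`, `0` in `y`
  have hdigit : ∀ i, digit (x i) j = digit (y i) j + if i ∈ Δ then 1 else 0 := by
    intro i
    have hi := hagree i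
    rw [div_two_pow_succ, div_two_pow_succ] at hi
    have := Nat.div_le_div_right (c := 2 ^ j) (hle i)
    simp only [digit, Δ, mem_filter, mem_univ, true_and]
    split_ifs <;> omega
  have hsum : colSum x j = colSum y j + #Δ := by
    simp only [colSum, hdigit, sum_add_distrib, sum_boole, Nat.cast_id, filter_mem_eq_inter,
      univ_inter]
  have hΔ : Δ.Nonempty := by
    obtain ⟨i, hi⟩ := not_forall.1 hdiffer
    exact ⟨i, by simpa [Δ] using hi⟩
  have hΔS : Δ ⊆ S := fun i hi => by_contra fun hiS => (mem_filter.1 hi).2 (by rw [heq i hiS])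
  exact Nat.not_dvd_of_pos_of_lt hΔ.card_pos ((card_le_card hΔS).trans_lt (by omega))
    ((Nat.dvd_add_right (hy j)).1 (hsum ▸ hx j))

end MooreMove

-- the digits of `m` above position `b`, then the digit `d` at position `b`, then zeros
def truncateAt (m b d : ℕ) : ℕ := 2 ^ b * (2 * (m / 2 ^ (b + 1)) + d)

theorem truncateAt_div_two_pow (m b d : ℕ) :
    truncateAt m b d / 2 ^ b = 2 * (m / 2 ^ (b + 1)) + d :=
  Nat.mul_div_cancel_left _ (by positivity)

theorem truncateAt_div_two_pow_succ {d : ℕ} (hd : d < 2) (m b : ℕ) :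
    truncateAt m b d / 2 ^ (b + 1) = m / 2 ^ (b + 1) := by
  rw [div_two_pow_succ, truncateAt_div_two_pow]
  omega

theorem digit_truncateAt {d : ℕ} (hd : d < 2) (m b : ℕ) : digit (truncateAt m b d) b = d := by
  rw [digit, truncateAt_div_two_pow]
  omega

theorem truncateAt_zero_div_two_pow_lt {m b : ℕ} (h : digit m b = 1) :
    truncateAt m b 0 / 2 ^ b < m / 2 ^ b := by
  rw [digit] at h
  rw [truncateAt_div_two_pow, div_two_pow_succ]
  omega

theorem exists_dvd_sub_add {k t : ℕ} (ht : t ≤ k) (c : ℕ) :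
    ∃ d r, d ≤ t ∧ r ≤ c ∧ t + r ≤ k ∧ k + 1 ∣ c - r + d := by
  have hc := Nat.div_add_mod c (k + 1)
  have hr := Nat.mod_lt c k.succ_pos
  by_cases h : k + 1 - c % (k + 1) ≤ t
  · exact ⟨k + 1 - c % (k + 1), 0, h, Nat.zero_le c, by omega, c / (k + 1) + 1, by grind⟩
  · exact ⟨0, c % (k + 1), Nat.zero_le t, Nat.mod_le c _, by omega, c / (k + 1), by omega⟩

section Repair

variable {k n : ℕ}

theorem exists_fix_column (b : ℕ) (x : Fin n → ℕ) {T : Finset (Fin n)} (hT : #T ≤ k) :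
    ∃ (x' : Fin n → ℕ) (R : Finset (Fin n)), #(T ∪ R) ≤ k ∧ (∀ i ∉ T ∪ R, x' i = x i) ∧
      (∀ i, x' i / 2 ^ (b + 1) = x i / 2 ^ (b + 1)) ∧ (∀ i ∈ R, x' i / 2 ^ b < x i / 2 ^ b) ∧
      k + 1 ∣ colSum x' b := by
  set U := univ.filter fun i => i ∉ T ∧ digit (x i) b = 1
  obtain ⟨d, r, hdT, hrU, hTr, hdvd⟩ := exists_dvd_sub_add hT #U
  obtain ⟨D, hDT, rfl⟩ := exists_subset_card_eq hdT
  obtain ⟨R, hRU, rfl⟩ := exists_subset_card_eq hrU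
  have hU : ∀ i ∈ U, i ∉ T ∧ digit (x i) b = 1 := fun i hi => by simpa [U] using hi
  set x' : Fin n → ℕ := fun i =>
    if i ∈ T ∪ R then truncateAt (x i) b (if i ∈ D then 1 else 0) else x i
  have hdigit : ∀ i, digit (x' i) b = (if i ∈ D then 1 else 0) + if i ∈ U \ R then 1 else 0 := by
    intro i
    by_cases hi : i ∈ T ∪ R
    · have hiU : i ∉ U \ R := fun h => (mem_union.1 hi).elim (hU i (mem_sdiff.1 h).1).1
        (mem_sdiff.1 h).2
      simp only [x', if_pos hi, if_neg hiU, add_zero]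
      exact digit_truncateAt (by split_ifs <;> norm_num) _ _
    · have hiD : i ∉ D := fun h => hi (mem_union_left R (hDT h))
      rw [mem_union, not_or] at hi
      have := digit_lt_two (x i) b
      simp only [x', mem_union, hi.1, hi.2, hiD, mem_sdiff, U, mem_filter, mem_univ,
        not_false_eq_true, true_and, and_true, or_self, if_false, zero_add]
      split_ifs <;> omega
  refine ⟨x', R, (card_union_le T R).trans hTr, fun i hi => if_neg hi, fun i => ?_,
    fun i hi => ?_, ?_⟩
  · simp only [x']
    split_ifs <;> simp [truncateAt_div_two_pow_succ]
  · have hiD : i ∉ D := fun h => (hU i (hRU hi)).1 (hDT h)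
    simp only [x', if_pos (mem_union_right T hi), if_neg hiD]
    exact truncateAt_zero_div_two_pow_lt (hU i (hRU hi)).2
  · simp only [colSum, hdigit, sum_add_distrib, sum_boole, Nat.cast_id, filter_mem_eq_inter,
      univ_inter, card_sdiff_of_subset hRU]
    rwa [Nat.add_comm #D]

theorem exists_mooreBalanced_of_dvd_colSum_ge (b : ℕ) (x : Fin n → ℕ) {T : Finset (Fin n)}
    (hT : #T ≤ k) (hx : ∀ j, b ≤ j → k + 1 ∣ colSum x j) :
    ∃ (y : Fin n → ℕ) (T' : Finset (Fin n)), T ⊆ T' ∧ #T' ≤ k ∧ (∀ i ∉ T', y i = x i) ∧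
      (∀ i ∈ T', y i / 2 ^ b = x i / 2 ^ b) ∧ (∀ i ∈ T', i ∉ T → y i < x i) ∧
      MooreBalanced k y := by
  induction b generalizing x T with
  | zero =>
    exact ⟨x, T, subset_rfl, hT, fun _ _ => rfl, fun _ _ => rfl, fun i hi hiT => (hiT hi).elim,
      fun j => hx j (Nat.zero_le j)⟩
  | succ b ih =>
    obtain ⟨x', R, hTR, hout, hhigh, hR, hcol⟩ := exists_fix_column b x hT
    have hx' : ∀ j, b ≤ j → k + 1 ∣ colSum x' j := by
      intro j hj
      rcases hj.eq_or_lt with rfl | hj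
      · exact hcol
      · rw [colSum_eq_of_div_eq hhigh hj]
        exact hx j hj
    obtain ⟨y, T', hsub, hT', hyout, hydiv, hylt, hy⟩ := ih x' hTR hx'
    refine ⟨y, T', subset_union_left.trans hsub, hT', fun i hi => ?_, fun i hi => ?_,
      fun i hi hiT => ?_, hy⟩
    · rw [hyout i hi, hout i fun h => hi (hsub h)]
    · rw [div_two_pow_succ, hydiv i hi, ← div_two_pow_succ, hhigh]
    · by_cases hiR : i ∈ R
      · exact Nat.lt_of_div_lt_div (hydiv i hi ▸ hR i hiR)
      · have hiTR : i ∉ T ∪ R := by simp [hiT, hiR]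
        exact (hylt i hi hiTR).trans_eq (hout i hiTR)

theorem exists_mooreMove_to_mooreBalanced {x : Fin n → ℕ} (hx : ¬ MooreBalanced k x) :
    ∃ y, MooreMove k x y ∧ MooreBalanced k y := by
  have hhigh : ∀ j, ∑ i, x i ≤ j → k + 1 ∣ colSum x j := fun j hj => by
    rw [colSum_eq_zero_of_lt fun i =>
      (lt_two_pow_sum x i).trans_le (Nat.pow_le_pow_right two_pos hj)]
    exact dvd_zero _
  obtain ⟨y, T, -, hT, hout, -, hlt, hy⟩ :=
    exists_mooreBalanced_of_dvd_colSum_ge _ x (T := ∅) (Nat.zero_le k) hhigh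
  refine ⟨y, ⟨T, nonempty_iff_ne_empty.2 ?_, hT, fun i hi => hlt i hi (notMem_empty i), hout⟩,
    hy⟩
  rintro rfl
  exact hx (funext (fun i => hout i (notMem_empty i)) ▸ hy)

end Repair

/-- Moore's criterion for P-positions of Moore's nim(n, ≤k). -/
theorem moore_PPos_iff {n k : ℕ} (x : Fin n → ℕ) :
    PPos (MooreMove k) x ↔ ∀ j, colSum x j % (k + 1) = 0 := by
  simp only [← Nat.dvd_iff_mod_eq_zero]
  exact pPos_iff_of_kernel MooreMove.wellFounded_flip (fun _ _ hx h => h.not_mooreBalanced hx)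
    (fun _ => exists_mooreMove_to_mooreBalanced) x
end

section
/- If x is a P-position in Moore's nim(n, ≤k) (i.e., every column sum of the Bouton matrix is 0 mod k+1), then every move from x leads to a position having some column sum not congruent to 0 mod k+1. -/
/-!
Let the move reduce the piles in `S`, and let `J` be the highest bit position at which some
reduced pile changes. In column `J` every reduced pile loses its bit or keeps it, and at least
one loses it, so the column sum drops by some `m` with `1 ≤ m ≤ |S| ≤ k`. Two multiples of
`k + 1` cannot differ by such an `m`.
-/

lemma digit_eq_toNat_testBit (m j : ℕ) : digit m j = (m.testBit j).toNat := by
  rw [digit, Nat.testBit_eq_decide_div_mod_eq]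
  rcases Nat.mod_two_eq_zero_or_one (m / 2 ^ j) with h | h <;> simp [h]

lemma digit_le_one (m j : ℕ) : digit m j ≤ 1 :=
  Nat.le_of_lt_succ (Nat.mod_lt _ two_pos)

/-- The witness is the most significant bit at which `a` and `b` differ. -/
lemma exists_digit_lt_of_lt {a b : ℕ} (h : a < b) :
    ∃ d, digit a d < digit b d ∧ ∀ j, d ≤ j → digit a j ≤ digit b j := by
  obtain ⟨d, hd, habove⟩ := Nat.exists_most_significant_bit (n := a ^^^ b)
    (fun h0 => h.ne (xor_eq_zero_iff.mp h0))
  simp only [Nat.testBit_xor, bne_eq_false_iff_eq] at hd habove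
  have hbits : a.testBit d = false ∧ b.testBit d = true := by
    have hne : a.testBit d ≠ b.testBit d := by simpa using hd
    cases hb : b.testBit d
    · have ha : a.testBit d = true := by simpa [hb] using hne
      exact absurd (Nat.lt_of_testBit d hb ha fun j hj => (habove j hj).symm) h.not_gt
    · exact ⟨by simpa [hb] using hne, rfl⟩
  refine ⟨d, ?_, fun j hj => ?_⟩
  · simp [digit_eq_toNat_testBit, hbits]
  · rcases hj.lt_or_eq with hj | rfl
    · rw [digit_eq_toNat_testBit, digit_eq_toNat_testBit, habove j hj]
    · simp [digit_eq_toNat_testBit, hbits]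

section Columns

variable {n : ℕ} {x y : Fin n → ℕ} {S : Finset (Fin n)}

lemma colSum_le_colSum_add_card (heq : ∀ i ∉ S, y i = x i) (j : ℕ) :
    colSum x j ≤ colSum y j + S.card := by
  have hpt : ∀ i, digit (x i) j ≤ digit (y i) j + if i ∈ S then 1 else 0 := by
    intro i
    by_cases hi : i ∈ S
    · simpa [hi] using (digit_le_one (x i) j).trans (Nat.le_add_left 1 _)
    · simp [hi, heq i hi]
  calc colSum x j ≤ ∑ i, (digit (y i) j + if i ∈ S then 1 else 0) :=
        Finset.sum_le_sum fun i _ => hpt i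
    _ = colSum y j + S.card := by
        rw [Finset.sum_add_distrib, Finset.sum_boole, Finset.filter_mem_eq_inter,
          Finset.univ_inter, Nat.cast_id, colSum]

lemma exists_colSum_lt (hS : S.Nonempty) (hlt : ∀ i ∈ S, y i < x i)
    (heq : ∀ i ∉ S, y i = x i) : ∃ j, colSum y j < colSum x j := by
  choose! d hd_lt hd_le using fun i (hi : i ∈ S) => exists_digit_lt_of_lt (hlt i hi)
  obtain ⟨i₀, hi₀, hmax⟩ := S.exists_max_image d hS
  have hpt : ∀ i, digit (y i) (d i₀) ≤ digit (x i) (d i₀) := fun i => by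
    by_cases hi : i ∈ S
    · exact hd_le i hi _ (hmax i hi)
    · rw [heq i hi]
  exact ⟨d i₀, Finset.sum_lt_sum (fun i _ => hpt i) ⟨i₀, Finset.mem_univ _, hd_lt i₀ hi₀⟩⟩

end Columns

lemma mod_ne_zero_of_lt_of_le_add {a b k : ℕ} (ha : a % (k + 1) = 0) (hba : b < a)
    (hab : a ≤ b + k) : b % (k + 1) ≠ 0 := by
  intro hb
  have hdvd := Nat.dvd_sub (Nat.dvd_of_mod_eq_zero ha) (Nat.dvd_of_mod_eq_zero hb)
  have := Nat.le_of_dvd (Nat.sub_pos_of_lt hba) hdvd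
  omega

/-- any Moore move from a position with all column sums ≡ 0 mod k+1
leads to a position with some column sum ≢ 0 mod k+1. -/
theorem moore_move_unbalances {n k : ℕ} (x y : Fin n → ℕ)
    (hx : ∀ j, colSum x j % (k + 1) = 0) (h : MooreMove k x y) :
    ∃ j, colSum y j % (k + 1) ≠ 0 := by
  obtain ⟨S, hS, hcard, hlt, heq⟩ := h
  obtain ⟨j, hj⟩ := exists_colSum_lt hS hlt heq
  exact ⟨j, mod_ne_zero_of_lt_of_le_add (hx j) hj
    ((colSum_le_colSum_add_card heq j).trans (by omega))⟩
end

section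
/- In the exact (4,2) nim, from any position of the form (a, a, a, b) with a ≤ b, every move leads to a position (written in nondecreasing order) whose three smallest coordinates are not all equal. -/
/-- every exact (4,2) nim move from a position of the form
(a,a,a,b), a ≤ b, leads to a position which is not a permutation of any
(a',a',a',b') with a' ≤ b'. -/
theorem exact42_moves_from_P (a b : ℕ) (hab : a ≤ b) (y : Fin 4 → ℕ)
    (h : ExactMove 2 ![a, a, a, b] y) :
    ¬ ∃ (a' b' : ℕ) (σ : Equiv.Perm (Fin 4)), a' ≤ b' ∧ y ∘ σ = ![a', a', a', b'] := by
  rintro ⟨a', b', σ, ha'b', hσ⟩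
  obtain ⟨S, hcard, hlt, heqS⟩ := h
  have hkey : ∀ j : Fin 4, j ≠ σ 3 → y j = a' := by
    intro j hj
    have h1 : y (σ (σ.symm j)) = ![a', a', a', b'] (σ.symm j) := congrFun hσ (σ.symm j)
    rw [Equiv.apply_symm_apply] at h1
    have h2 : σ.symm j ≠ 3 := by
      intro hh
      apply hj
      rw [← hh, Equiv.apply_symm_apply]
    have h3 : σ.symm j = 0 ∨ σ.symm j = 1 ∨ σ.symm j = 2 :=
      (by decide : ∀ i : Fin 4, i ≠ 3 → i = 0 ∨ i = 1 ∨ i = 2) _ h2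
    rcases h3 with hh | hh | hh <;> rw [hh] at h1 <;> simpa using h1
  have hb' : y (σ 3) = b' := by simpa using congrFun hσ 3
  obtain ⟨u, v, huv, hS⟩ := Finset.card_eq_two.mp hcard
  have hlu : y u < ![a, a, a, b] u := hlt u (by simp [hS])
  have hlv : y v < ![a, a, a, b] v := hlt v (by simp [hS])
  have heq' : ∀ k : Fin 4, k ≠ u → k ≠ v → y k = ![a, a, a, b] k := fun k h1 h2 =>
    heqS k (by simp [hS, h1, h2])
  have hσ3 : σ 3 = 0 ∨ σ 3 = 1 ∨ σ 3 = 2 ∨ σ 3 = 3 :=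
    (by decide : ∀ i : Fin 4, i = 0 ∨ i = 1 ∨ i = 2 ∨ i = 3) _
  have e0 := hkey 0; have e1 := hkey 1; have e2 := hkey 2; have e3 := hkey 3
  have E0 := heq' 0; have E1 := heq' 1; have E2 := heq' 2; have E3 := heq' 3
  clear hkey heq' hlt heqS hσ
  rcases hσ3 with hc | hc | hc | hc <;> rw [hc] at hb' e0 e1 e2 e3 <;>
    fin_cases u <;> fin_cases v <;> simp_all <;> omega
end

section
/- In the exact (4,2) nim, from any position (a, b, c, d) with a ≤ b ≤ c ≤ d that has at least two nonempty piles and whose three smallest coordinates are not all equal (i.e., a < c), there exists a move to a position of the form (a', a', a', b') with a' ≤ b' in nondecreasing order. -/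
/-- from a sorted exact (4,2) nim position with at least two nonempty
piles whose three smallest piles are not all equal, there is a move to a position
of the form (a',a',a',b') with a' ≤ b' (up to reordering). -/
theorem exact42_move_to_P (a b c d : ℕ) (hab : a ≤ b) (hbc : b ≤ c) (hcd : c ≤ d)
    (hc : 0 < c) (hac : a < c) :
    ∃ y, ExactMove 2 ![a, b, c, d] y ∧
      ∃ (a' b' : ℕ) (σ : Equiv.Perm (Fin 4)), a' ≤ b' ∧ y ∘ σ = ![a', a', a', b'] := by
  rcases eq_or_lt_of_le hab with rfl | hlt
  · -- a = b: reduce piles 2,3 to a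
    refine ⟨![a, a, a, a], ⟨{2, 3}, by decide, ?_, ?_⟩, a, a, 1, le_refl a, ?_⟩
    · intro i hi
      fin_cases hi <;> simp <;> omega
    · intro i hi
      fin_cases i <;> simp_all <;> simp_all [Finset.mem_insert]
    · funext i; fin_cases i <;> rfl
  · -- a < b: reduce piles 1,2 to a
    refine ⟨![a, a, a, d], ⟨{1, 2}, by decide, ?_, ?_⟩, a, d, 1, by omega, ?_⟩
    · intro i hi
      fin_cases hi <;> simp <;> omega
    · intro i hi
      fin_cases i <;> simp_all <;> simp_all [Finset.mem_insert]
    · funext i; fin_cases i <;> rfl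
end

section
/- Let x be a 4-tuple of nonnegative integers that is not balanced (some bit-column sum is not 0 mod 3). Then there exists a 4-tuple x' obtained from x by strictly decreasing at most 2 coordinates (each by a positive amount, leaving the others unchanged) such that x' is balanced (every bit-column sum is 0 or 3). -/
lemma digit_eq_zero_of_le {m j : ℕ} (h : m ≤ j) : digit m j = 0 := by
  rw [digit, Nat.div_eq_of_lt (m.lt_two_pow_self.trans_le (Nat.pow_le_pow_right two_pos h))]

lemma digit_succ (m j : ℕ) : digit m (j + 1) = digit (m / 2) j := by
  rw [digit, digit, Nat.div_div_eq_div_mul, pow_succ']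

lemma digit_add_two_mul_zero {c : ℕ} (hc : c ≤ 1) (m : ℕ) : digit (c + 2 * m) 0 = c := by
  rw [digit, pow_zero, Nat.div_one]; omega

lemma digit_add_two_mul_succ {c : ℕ} (hc : c ≤ 1) (m j : ℕ) :
    digit (c + 2 * m) (j + 1) = digit m j := by
  rw [digit_succ]; congr 1; omega

lemma testBit_eq_decide_digit (m j : ℕ) : m.testBit j = decide (digit m j = 1) :=
  Nat.testBit_eq_decide_div_mod_eq

lemma lt_of_digit {m n J : ℕ} (hn : digit n J = 0) (hm : digit m J = 1)
    (h : ∀ j, J < j → digit n j = digit m j) : n < m :=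
  Nat.lt_of_testBit J (by simp [testBit_eq_decide_digit, hn])
    (by simp [testBit_eq_decide_digit, hm]) fun j hj => by simp [testBit_eq_decide_digit, h j hj]

lemma exists_digit_eq_ite (d : ℕ → ℕ) (hd : ∀ j, d j ≤ 1) (J m : ℕ) :
    ∃ n, ∀ j, digit n j = if j < J then d j else digit m j := by
  induction J generalizing d m with
  | zero => exact ⟨m, fun j => by simp⟩
  | succ J ih =>
    obtain ⟨n, hn⟩ := ih (fun j => d (j + 1)) (fun j => hd _) (m / 2)
    refine ⟨d 0 + 2 * n, fun j => ?_⟩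
    cases j with
    | zero => simp [digit_add_two_mul_zero (hd 0)]
    | succ j => simp [digit_add_two_mul_succ (hd 0), hn, digit_succ]

def IsLowering (m : ℕ) (d : ℕ → ℕ) : Prop :=
  (∀ j, d j ≤ 1) ∧ ∃ J, digit m J = 1 ∧ d J = 0 ∧ ∀ j, J < j → d j = digit m j

lemma isLowering_ite {m J : ℕ} (hm : digit m J = 1) {b : ℕ → ℕ} (hb : ∀ j, b j ≤ 1)
    (hbJ : b J = 0) : IsLowering m fun j => if J < j then digit m j else b j :=
  ⟨fun j => by dsimp only; split_ifs; exacts [digit_le_one m j, hb j],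
    J, hm, by simp [hbJ], fun j hj => by simp [hj]⟩

lemma IsLowering.exists_lt {m : ℕ} {d : ℕ → ℕ} (h : IsLowering m d) :
    ∃ n < m, digit n = d := by
  obtain ⟨hd, J, hmJ, hdJ, hd_gt⟩ := h
  obtain ⟨n, hn⟩ := exists_digit_eq_ite d hd (J + 1) m
  have hnd : digit n = d := funext fun j => by
    rw [hn]
    split_ifs with hj
    · rfl
    · exact (hd_gt j (by omega)).symm
  refine ⟨n, lt_of_digit (hnd ▸ hdJ) hmJ fun j hj => ?_, hnd⟩
  rw [hnd, hd_gt j hj]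

lemma Nat.exists_greatest_of_bdd {P : ℕ → Prop} (hbdd : ∃ b, ∀ n, P n → n ≤ b)
    (hex : ∃ n, P n) : ∃ m, P m ∧ ∀ n, P n → n ≤ m := by
  classical
  obtain ⟨b, hb⟩ := hbdd
  obtain ⟨n, hn⟩ := hex
  exact ⟨Nat.findGreatest P b, Nat.findGreatest_spec (hb n hn) hn,
    fun k hk => Nat.le_findGreatest (hb k hk) hk⟩

section ColumnSums

variable {n : ℕ} (x : Fin n → ℕ)

def IsBalanced : Prop := ∀ j, colSum x j = 0 ∨ colSum x j = 3

def colSumOn (s : Finset (Fin n)) (j : ℕ) : ℕ := ∑ i ∈ s, digit (x i) j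

lemma colSumOn_le_card (s : Finset (Fin n)) (j : ℕ) : colSumOn x s j ≤ s.card := by
  simpa [colSumOn] using Finset.sum_le_card_nsmul s _ 1 fun i _ => digit_le_one (x i) j

lemma colSum_eq_digit_add_colSumOn (i : Fin n) (j : ℕ) :
    colSum x j = digit (x i) j + colSumOn x {i}ᶜ j :=
  Fintype.sum_eq_add_sum_compl i _

lemma colSumOn_compl_singleton {i i' : Fin n} (h : i' ≠ i) (j : ℕ) :
    colSumOn x {i}ᶜ j = digit (x i') j + colSumOn x {i', i}ᶜ j := by
  rw [colSumOn, colSumOn, Finset.compl_insert,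
    Finset.add_sum_erase _ (fun i => digit (x i) j) (Finset.mem_compl.2 (by simpa using h))]

lemma exists_digit_eq_one_of_colSumOn_ne_zero {s : Finset (Fin n)} {j : ℕ}
    (h : colSumOn x s j ≠ 0) : ∃ i ∈ s, digit (x i) j = 1 := by
  obtain ⟨i, hi, hne⟩ := Finset.exists_ne_zero_of_sum_ne_zero h
  exact ⟨i, hi, by have := digit_le_one (x i) j; omega⟩

lemma colSum_eq_zero_of_le {j : ℕ} (h : ∑ i, x i ≤ j) : colSum x j = 0 :=
  Finset.sum_eq_zero fun i _ =>
    digit_eq_zero_of_le ((Finset.single_le_sum (fun i _ => Nat.zero_le (x i))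
      (Finset.mem_univ i)).trans h)

lemma exists_greatest_colSum_mod_three_ne_zero (hx : ∃ j, colSum x j % 3 ≠ 0) :
    ∃ J, colSum x J % 3 ≠ 0 ∧ ∀ j, J < j → colSum x j % 3 = 0 := by
  obtain ⟨J, hJ, hmax⟩ := Nat.exists_greatest_of_bdd
    ⟨∑ i, x i, fun j hj => not_lt.1 fun h => hj (by rw [colSum_eq_zero_of_le x h.le])⟩ hx
  exact ⟨J, hJ, fun j hj => by_contra fun h => (hmax j h).not_gt hj⟩

lemma exists_mooreMove_of_isLowering (k : ℕ) {S : Finset (Fin n)} (hS : S.Nonempty)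
    (hSk : S.card ≤ k) (r : Fin n → ℕ → ℕ) (hr : ∀ i ∈ S, IsLowering (x i) (r i)) :
    ∃ x', MooreMove k x x' ∧ ∀ j, colSum x' j = ∑ i ∈ S, r i j + colSumOn x Sᶜ j := by
  choose y hy_lt hy_digit using fun i hi => (hr i hi).exists_lt
  let x' i := if hi : i ∈ S then y i hi else x i
  refine ⟨x', ⟨S, hS, hSk, fun i hi => by simp [x', hi, hy_lt], fun i hi => by simp [x', hi]⟩,
    fun j => ?_⟩
  rw [colSum, ← Finset.sum_add_sum_compl S]
  congr 1
  · exact Finset.sum_congr rfl fun i hi => by simp [x', hi, hy_digit]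
  · exact Finset.sum_congr rfl fun i hi => by simp [x', Finset.mem_compl.1 hi]

end ColumnSums

section FourPiles

variable (x : Fin 4 → ℕ)

lemma colSumOn_compl_singleton_le (i : Fin 4) (j : ℕ) : colSumOn x {i}ᶜ j ≤ 3 :=
  (colSumOn_le_card x _ j).trans (by simp [Finset.card_compl])

lemma colSumOn_compl_pair_le {i i' : Fin 4} (h : i' ≠ i) (j : ℕ) : colSumOn x {i', i}ᶜ j ≤ 2 :=
  (colSumOn_le_card x _ j).trans (by rw [Finset.card_compl, Finset.card_pair h]; rfl)

variable {x}

lemma exists_mooreMove_balanced_one_pile {i₀ : Fin 4} {J : ℕ} (h₀ : digit (x i₀) J = 1)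
    (htop : ∀ j, J < j → colSum x j % 3 = 0) (hJ : colSum x J % 3 ≠ 0)
    (hbelow : ∀ j ≤ J, colSumOn x {i₀}ᶜ j ≠ 1) :
    ∃ x', MooreMove 2 x x' ∧ IsBalanced x' := by
  have ht := colSumOn_compl_singleton_le x i₀
  have hsplit := colSum_eq_digit_add_colSumOn x i₀
  let b j := if colSumOn x {i₀}ᶜ j = 2 then 1 else 0
  obtain ⟨x', hmove, hsum⟩ := exists_mooreMove_of_isLowering x 2 (Finset.singleton_nonempty i₀)
    (by simp) (fun _ j => if J < j then digit (x i₀) j else b j) fun i hi => by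
      rw [Finset.mem_singleton.1 hi]
      exact isLowering_ite h₀ (fun j => by simp only [b]; split_ifs <;> omega)
        (by have := hsplit J; simp only [b]; split_ifs <;> omega)
  refine ⟨x', hmove, fun j => ?_⟩
  rw [hsum, Finset.sum_singleton]
  have := hsplit j
  have := digit_le_one (x i₀) j
  have := ht j
  have := htop j
  have := hbelow j
  simp only [b]
  rcases lt_trichotomy j J with h | rfl | h <;> split_ifs <;> omega

lemma exists_mooreMove_balanced_two_piles {i₀ i₁ : Fin 4} (hne : i₁ ≠ i₀) {J₁ J₂ : ℕ}
    (hJ : J₂ ≤ J₁) (h₀ : digit (x i₀) J₁ = 1) (h₁ : digit (x i₁) J₂ = 1)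
    (htop : ∀ j, J₁ < j → colSum x j % 3 = 0) (hJ₁ : colSum x J₁ % 3 ≠ 0)
    (hmid : ∀ j, J₂ < j → j ≤ J₁ → colSumOn x {i₀}ᶜ j ≠ 1)
    (hJ₂ : colSumOn x {i₀}ᶜ J₂ = 1) :
    ∃ x', MooreMove 2 x x' ∧ IsBalanced x' := by
  have ht₂ := colSumOn_compl_pair_le x hne
  have hsplit := colSumOn_compl_singleton x hne
  have ht₂J₂ : colSumOn x {i₁, i₀}ᶜ J₂ = 0 := by have := hsplit J₂; omega
  -- below `J₂`, digits `(t ≠ 0, t = 1)` complete a column whose other piles sum to `t ≤ 2`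
  let b₀ j := if j = J₁ then 0 else if J₂ < j then (if colSumOn x {i₀}ᶜ j = 2 then 1 else 0)
    else if colSumOn x {i₁, i₀}ᶜ j = 0 then 0 else 1
  let b₁ j := if colSumOn x {i₁, i₀}ᶜ j = 1 then 1 else 0
  let r i j := if i = i₀ then (if J₁ < j then digit (x i₀) j else b₀ j)
    else if J₂ < j then digit (x i₁) j else b₁ j
  obtain ⟨x', hmove, hsum⟩ := exists_mooreMove_of_isLowering x 2
    (Finset.insert_nonempty i₁ {i₀}) Finset.card_le_two r fun i hi => by
      rcases Finset.mem_insert.1 hi with rfl | hi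
      · simpa [r, hne] using isLowering_ite h₁ (b := b₁)
          (fun j => by simp only [b₁]; split_ifs <;> omega) (by simp only [b₁, ht₂J₂]; rfl)
      · rw [Finset.mem_singleton.1 hi]
        simpa [r] using isLowering_ite h₀ (b := b₀)
          (fun j => by simp only [b₀]; split_ifs <;> omega) (by simp [b₀])
  refine ⟨x', hmove, fun j => ?_⟩
  rw [hsum, Finset.sum_pair hne]
  have := colSum_eq_digit_add_colSumOn x i₀ j
  have := hsplit j
  have := colSumOn_compl_singleton_le x i₀ j
  have := digit_le_one (x i₀) j
  have := digit_le_one (x i₁) j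
  have := ht₂ j
  have := htop j
  have := hmid j
  simp only [r, b₀, b₁, if_neg hne, if_true]
  rcases lt_trichotomy j J₁ with h | rfl | h <;> rcases lt_trichotomy j J₂ with h' | rfl | h' <;>
    split_ifs <;> omega

end FourPiles

/-- from an unbalanced 4-tuple one can strictly decrease at most two
coordinates to reach a balanced 4-tuple. -/
theorem unbalanced_move_to_balanced (x : Fin 4 → ℕ)
    (hx : ∃ j, colSum x j % 3 ≠ 0) :
    ∃ x', MooreMove 2 x x' ∧ ∀ j, colSum x' j = 0 ∨ colSum x' j = 3 := by
  obtain ⟨J₁, hJ₁, htop⟩ := exists_greatest_colSum_mod_three_ne_zero x hx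
  obtain ⟨i₀, -, h₀⟩ := exists_digit_eq_one_of_colSumOn_ne_zero x (s := Finset.univ) (j := J₁)
    (by change colSum x J₁ ≠ 0; omega)
  by_cases hlow : ∃ j ≤ J₁, colSumOn x {i₀}ᶜ j = 1
  · obtain ⟨J₂, ⟨hJ₂, ht₁⟩, hmax⟩ := Nat.exists_greatest_of_bdd ⟨J₁, fun j h => h.1⟩ hlow
    obtain ⟨i₁, hi₁, h₁⟩ := exists_digit_eq_one_of_colSumOn_ne_zero x (s := {i₀}ᶜ) (j := J₂)
      (by omega)
    exact exists_mooreMove_balanced_two_piles (by simpa using hi₁) hJ₂ h₀ h₁ htop hJ₁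
      (fun j hj hj' h => (hmax j ⟨hj', h⟩).not_gt hj) ht₁
  · push Not at hlow
    exact exists_mooreMove_balanced_one_pile h₀ htop hJ₁ hlow
end

section
/- Let x be a balanced 4-tuple of nonnegative integers (every bit-column sum in {0,3}) and let x → y be a transformation strictly decreasing exactly one coordinate. Then there is a bit index j with column sum of y at j not in {0,3}; in fact the highest bit where x and y differ gives a column with sum 2 or is part of an unbalanced column in y. -/
lemma digit_ext {a b : ℕ} (h : ∀ j, digit a j = digit b j) : a = b := by
  apply Nat.eq_of_testBit_eq
  intro j
  have := h j
  unfold digit at this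
  simp [Nat.testBit_eq_decide_div_mod_eq, this]

/-- decreasing exactly one coordinate of a balanced 4-tuple produces
an unbalanced column; moreover at the highest differing bit the column sum of the
result is 2 or belongs to an unbalanced column. -/
theorem single_decrease_unbalances (x y : Fin 4 → ℕ)
    (hx : ∀ j, colSum x j = 0 ∨ colSum x j = 3)
    (h : ∃ i, y i < x i ∧ ∀ j, j ≠ i → y j = x j) :
    (∃ j, colSum y j ≠ 0 ∧ colSum y j ≠ 3) ∧
    ∀ j, (∀ t, j < t → ∀ i, digit (x i) t = digit (y i) t) →
      (∃ i, digit (x i) j ≠ digit (y i) j) →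
      (colSum y j = 2 ∨ (colSum y j ≠ 0 ∧ colSum y j ≠ 3)) := by
  obtain ⟨i₀, hlt, heq⟩ := h
  have key : ∀ j, digit (x i₀) j ≠ digit (y i₀) j → colSum y j ≠ 0 ∧ colSum y j ≠ 3 := by
    intro j hd
    have hbx : digit (x i₀) j ≤ 1 := Nat.le_of_lt_succ (Nat.mod_lt _ (by norm_num))
    have hby : digit (y i₀) j ≤ 1 := Nat.le_of_lt_succ (Nat.mod_lt _ (by norm_num))
    have hsum : colSum y j + digit (x i₀) j = colSum x j + digit (y i₀) j := by
      unfold colSum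
      rw [← Finset.add_sum_erase _ _ (Finset.mem_univ i₀),
          ← Finset.add_sum_erase _ _ (Finset.mem_univ i₀)]
      have hrest : ∑ i ∈ Finset.univ.erase i₀, digit (y i) j
          = ∑ i ∈ Finset.univ.erase i₀, digit (x i) j :=
        Finset.sum_congr rfl fun i hi => by rw [heq i (Finset.ne_of_mem_erase hi)]
      omega
    have hxj := hx j
    omega
  constructor
  · have hne : y i₀ ≠ x i₀ := ne_of_lt hlt
    have hdj : ∃ j, digit (x i₀) j ≠ digit (y i₀) j := by
      by_contra hc
      push_neg at hc
      exact hne (digit_ext fun j => (hc j).symm)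
    obtain ⟨j, hj⟩ := hdj
    exact ⟨j, key j hj⟩
  · rintro j - ⟨i, hi⟩
    have hii : i = i₀ := by
      by_contra hc
      exact hi (by rw [heq i hc])
    exact Or.inr (key j (hii ▸ hi))
end
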